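/- For all integers p, q, r ≥ 2 with 1/p + 1/q + 1/r ≤ 1, one has 2 ≤ μ(p,q,r) ≤ 3/√2. -/

import Mathlib

/-- The vertex set of the tree `T_{p,q,r}`: a central vertex (`none`) together
with three arms of `p-1`, `q-1` and `r-1` vertices. -/
abbrev TVertex (p q r : ℕ) : Type := Option (Fin (p - 1) ⊕ (Fin (q - 1) ⊕ Fin (r - 1)))

/-- Entry recording an edge between positions `i` and `j` of a path. -/
def pathEntry (i j : ℕ) : ℝ := if i + 1 = j ∨ j + 1 = i then 1 else 0

/-- Entry recording the edge from the central vertex to position `i` of an arm. -/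
def tipEntry (i : ℕ) : ℝ := if i = 0 then 1 else 0

/-- The adjacency matrix of the tree `T_{p,q,r}`: a central vertex joined to one
end of each of three paths with `p-1`, `q-1`, and `r-1` vertices respectively. -/
def adjT (p q r : ℕ) : Matrix (TVertex p q r) (TVertex p q r) ℝ :=
  fun v w =>
    match v, w with
    | none, none => 0
    | none, some (Sum.inl i) => tipEntry i
    | none, some (Sum.inr (Sum.inl i)) => tipEntry i
    | none, some (Sum.inr (Sum.inr i)) => tipEntry i
    | some (Sum.inl i), none => tipEntry i
    | some (Sum.inr (Sum.inl i)), none => tipEntry i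
    | some (Sum.inr (Sum.inr i)), none => tipEntry i
    | some (Sum.inl i), some (Sum.inl j) => pathEntry i j
    | some (Sum.inr (Sum.inl i)), some (Sum.inr (Sum.inl j)) => pathEntry i j
    | some (Sum.inr (Sum.inr i)), some (Sum.inr (Sum.inr j)) => pathEntry i j
    | _, _ => 0

/-- `μ(p,q,r)`, the largest eigenvalue of the adjacency matrix of `T_{p,q,r}`. -/
noncomputable def muT (p q r : ℕ) : ℝ :=
  sSup {μ : ℝ | ∃ x : TVertex p q r → ℝ, x ≠ 0 ∧ (adjT p q r).mulVec x = μ • x}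

/-
Upper bound (Collatz–Wielandt): `A` is entrywise nonnegative and the positive vector equal to
`2^(-k/2)` at distance `k` from the centre satisfies `A y ≤ (3/√2) y`, because
`2^(-k/2) + 2^(-(k+2)/2) = (3/√2) 2^(-(k+1)/2)`; comparing an eigenvector `x` with `y` where
`|x| / y` is largest bounds every eigenvalue by `3/√2`.

Lower bound (Rayleigh): the nonnegative vector equal to `1 - k/m` at distance `k` from the centre
on the arm with parameter `m` satisfies `A x ≥ 2 x`: it is linear along each arm, vanishes just
past its end, and at the centre `3 - (1/p + 1/q + 1/r) ≥ 2`. Hence `x ⬝ A x ≥ 2 x ⬝ x`, so the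
largest eigenvalue of the symmetric matrix `A` is at least `2`.
-/

open Matrix Finset

section Spectral

variable {n : Type*} [Fintype n]

lemma abs_le_of_mulVec_eq_smul_of_mulVec_le {A : Matrix n n ℝ} (hA : ∀ i j, 0 ≤ A i j)
    {y : n → ℝ} (hy : ∀ i, 0 < y i) {μ : ℝ} (hAy : A *ᵥ y ≤ μ • y) {c : ℝ} {x : n → ℝ}
    (hx : x ≠ 0) (hAx : A *ᵥ x = c • x) : |c| ≤ μ := by
  obtain ⟨j, hj⟩ := Function.ne_iff.1 hx
  have : Nonempty n := ⟨j⟩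
  obtain ⟨i, hi⟩ := Finite.exists_max fun k => |x k| / y k
  set t := |x i| / y i with ht
  have hxt : ∀ k, |x k| ≤ t * y k := fun k => (div_le_iff₀ (hy k)).1 (hi k)
  have ht0 : 0 < t := (div_pos (abs_pos.2 hj) (hy j)).trans_le (hi j)
  have hxi : 0 < |x i| := by simpa [ht, hy i] using ht0
  refine le_of_mul_le_mul_right ?_ hxi
  calc |c| * |x i| = |∑ k, A i k * x k| := by
        rw [← abs_mul, ← smul_eq_mul, ← Pi.smul_apply, ← hAx]; rfl
    _ ≤ ∑ k, A i k * (t * y k) := (abs_sum_le_sum_abs _ _).trans <| sum_le_sum fun k _ => by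
        rw [abs_mul, abs_of_nonneg (hA i k)]; exact mul_le_mul_of_nonneg_left (hxt k) (hA i k)
    _ = t * (A *ᵥ y) i := by simp only [mulVec, dotProduct, mul_sum, mul_left_comm]
    _ ≤ t * (μ * y i) := mul_le_mul_of_nonneg_left (hAy i) ht0.le
    _ = μ * |x i| := by rw [ht]; field_simp [(hy i).ne']

variable [DecidableEq n]

lemma Matrix.IsHermitian.dotProduct_mulVec_le {A : Matrix n n ℝ} (hA : A.IsHermitian) {μ : ℝ}
    (hμ : ∀ i, hA.eigenvalues i ≤ μ) (z : n → ℝ) : z ⬝ᵥ A *ᵥ z ≤ μ * (z ⬝ᵥ z) := by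
  set b := hA.eigenvectorBasis
  set w := WithLp.toLp 2 z
  have hcoord : ∀ i, inner ℝ (b i) (WithLp.toLp 2 (A *ᵥ z)) =
      hA.eigenvalues i * inner ℝ (b i) w := by
    intro i
    have hsymm := isSymmetric_toEuclideanLin_iff.2 hA (b i) w
    rw [toLpLin_apply, toLpLin_apply, WithLp.ofLp_toLp, hA.mulVec_eigenvectorBasis,
      WithLp.toLp_smul, WithLp.toLp_ofLp, real_inner_smul_left] at hsymm
    exact hsymm.symm
  have hw : inner ℝ w w = z ⬝ᵥ z := by
    rw [EuclideanSpace.inner_toLp_toLp]; rfl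
  calc z ⬝ᵥ A *ᵥ z = inner ℝ w (WithLp.toLp 2 (A *ᵥ z)) := by
        rw [EuclideanSpace.inner_toLp_toLp, dotProduct_comm]; rfl
    _ = ∑ i, hA.eigenvalues i * inner ℝ (b i) w ^ 2 := by
        rw [← b.sum_inner_mul_inner]
        refine sum_congr rfl fun i _ => ?_
        rw [hcoord, real_inner_comm]; ring
    _ ≤ ∑ i, μ * inner ℝ (b i) w ^ 2 := by gcongr with i; exact hμ i
    _ = μ * (z ⬝ᵥ z) := by
        rw [← mul_sum, ← hw, ← b.sum_inner_mul_inner]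
        simp only [real_inner_comm w, sq]

lemma Matrix.IsHermitian.exists_eigenvalue_ge_of_smul_le_mulVec {A : Matrix n n ℝ}
    (hA : A.IsHermitian) {x : n → ℝ} (hx0 : 0 ≤ x) (hx : x ≠ 0) {c : ℝ}
    (hc : c • x ≤ A *ᵥ x) : ∃ μ, (∃ v, v ≠ 0 ∧ A *ᵥ v = μ • v) ∧ c ≤ μ := by
  obtain ⟨j, -⟩ := Function.ne_iff.1 hx
  have : Nonempty n := ⟨j⟩
  obtain ⟨i, hi⟩ := Finite.exists_max hA.eigenvalues
  refine ⟨hA.eigenvalues i, ⟨_, fun h => ?_, hA.mulVec_eigenvectorBasis i⟩, ?_⟩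
  · exact hA.eigenvectorBasis.orthonormal.ne_zero i (by simpa using congrArg (WithLp.toLp 2) h)
  have hxx : 0 < x ⬝ᵥ x :=
    (dotProduct_nonneg_of_nonneg hx0 hx0).lt_of_ne (Ne.symm (dotProduct_self_eq_zero.not.2 hx))
  refine le_of_mul_le_mul_right ?_ hxx
  calc c * (x ⬝ᵥ x) = x ⬝ᵥ c • x := by rw [dotProduct_smul, smul_eq_mul]
    _ ≤ x ⬝ᵥ A *ᵥ x := dotProduct_le_dotProduct_of_nonneg_left hc hx0
    _ ≤ hA.eigenvalues i * (x ⬝ᵥ x) := hA.dotProduct_mulVec_le hi x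

end Spectral

lemma pathEntry_comm (i j : ℕ) : pathEntry i j = pathEntry j i := by
  simp only [pathEntry, or_comm]

lemma pathEntry_nonneg (i j : ℕ) : 0 ≤ pathEntry i j := by
  unfold pathEntry; split_ifs <;> norm_num

lemma tipEntry_nonneg (i : ℕ) : 0 ≤ tipEntry i := by
  unfold tipEntry; split_ifs <;> norm_num

lemma sum_tipEntry_mul {n : ℕ} (hn : 0 < n) (f : ℕ → ℝ) :
    ∑ j : Fin n, tipEntry j * f j = f 0 := by
  rw [Fin.sum_univ_eq_sum_range (fun j => tipEntry j * f j), Finset.sum_eq_single_of_mem 0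
    (mem_range.2 hn) fun j _ hj => by simp [tipEntry, hj]]
  simp [tipEntry]

-- The neighbour sum at vertex `i + 1` of a path carrying the values `f 0, f 1, …, f n`.
lemma tipEntry_mul_add_sum_pathEntry_mul {n i : ℕ} (hi : i < n) (f : ℕ → ℝ) :
    tipEntry i * f 0 + ∑ j : Fin n, pathEntry i j * f (j + 1) =
      f i + if i + 1 < n then f (i + 2) else 0 := by
  rw [Fin.sum_univ_eq_sum_range (fun j => pathEntry i j * f (j + 1))]
  have hsplit : ∀ j, pathEntry i j * f (j + 1) =
      (if i + 1 = j then f (j + 1) else 0) + if j + 1 = i then f (j + 1) else 0 := by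
    intro j; unfold pathEntry; split_ifs <;> first | ring1 | (exfalso; omega)
  simp only [hsplit, sum_add_distrib, sum_ite_eq, mem_range]
  rcases i with _ | i
  · simp [tipEntry]
  · simp [tipEntry, sum_ite_eq', show i < n by omega]
    exact add_comm _ _

section Tree

variable {p q r : ℕ}

lemma adjT_nonneg (v w : TVertex p q r) : 0 ≤ adjT p q r v w := by
  rcases v with _ | i | i | i <;> rcases w with _ | j | j | j <;>
    first | exact le_rfl | exact tipEntry_nonneg _ | exact pathEntry_nonneg _ _

lemma adjT_isHermitian : (adjT p q r).IsHermitian := by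
  refine isHermitian_iff_isSymm.2 (Matrix.IsSymm.ext fun v w => ?_)
  rcases v with _ | i | i | i <;> rcases w with _ | j | j | j <;>
    first | rfl | exact pathEntry_comm _ _

variable (p q r) in
/-- `φ m k` is the value at distance `k` from the centre on the arm with `m - 1` vertices. -/
def treeVec (φ : ℕ → ℕ → ℝ) : TVertex p q r → ℝ
  | none => 1
  | some (.inl i) => φ p (i + 1)
  | some (.inr (.inl i)) => φ q (i + 1)
  | some (.inr (.inr i)) => φ r (i + 1)

variable (φ : ℕ → ℕ → ℝ)

lemma adjT_mulVec_treeVec_none (hp : 2 ≤ p) (hq : 2 ≤ q) (hr : 2 ≤ r) :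
    (adjT p q r *ᵥ treeVec p q r φ) none = φ p 1 + φ q 1 + φ r 1 := by
  simp only [mulVec, dotProduct, Fintype.sum_option, Fintype.sum_sum_type, adjT, treeVec]
  rw [sum_tipEntry_mul (by omega) (φ p <| · + 1), sum_tipEntry_mul (by omega) (φ q <| · + 1),
    sum_tipEntry_mul (by omega) (φ r <| · + 1)]
  ring

lemma adjT_mulVec_treeVec_inl (hφ : φ p 0 = 1) (i : Fin (p - 1)) :
    (adjT p q r *ᵥ treeVec p q r φ) (some (.inl i)) =
      φ p i + if i + 2 < p then φ p (i + 2) else 0 := by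
  simp only [mulVec, dotProduct, Fintype.sum_option, Fintype.sum_sum_type, adjT, treeVec,
    zero_mul, sum_const_zero, add_zero]
  rw [← hφ, tipEntry_mul_add_sum_pathEntry_mul i.isLt]
  simp only [show (i : ℕ) + 1 < p - 1 ↔ i + 2 < p by omega]

lemma adjT_mulVec_treeVec_inr_inl (hφ : φ q 0 = 1) (i : Fin (q - 1)) :
    (adjT p q r *ᵥ treeVec p q r φ) (some (.inr (.inl i))) =
      φ q i + if i + 2 < q then φ q (i + 2) else 0 := by
  simp only [mulVec, dotProduct, Fintype.sum_option, Fintype.sum_sum_type, adjT, treeVec,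
    zero_mul, sum_const_zero, add_zero, zero_add]
  rw [← hφ, tipEntry_mul_add_sum_pathEntry_mul i.isLt]
  simp only [show (i : ℕ) + 1 < q - 1 ↔ i + 2 < q by omega]

lemma adjT_mulVec_treeVec_inr_inr (hφ : φ r 0 = 1) (i : Fin (r - 1)) :
    (adjT p q r *ᵥ treeVec p q r φ) (some (.inr (.inr i))) =
      φ r i + if i + 2 < r then φ r (i + 2) else 0 := by
  simp only [mulVec, dotProduct, Fintype.sum_option, Fintype.sum_sum_type, adjT, treeVec,
    zero_mul, sum_const_zero, zero_add]
  rw [← hφ, tipEntry_mul_add_sum_pathEntry_mul i.isLt]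
  simp only [show (i : ℕ) + 1 < r - 1 ↔ i + 2 < r by omega]

end Tree

lemma two_mul_one_sub_div_le {m i : ℕ} (hi : i + 1 < m) :
    2 * (1 - ((i + 1 : ℕ) : ℝ) / m) ≤
      (1 - (i : ℝ) / m) + if i + 2 < m then 1 - ((i + 2 : ℕ) : ℝ) / m else 0 := by
  have hm : (0 : ℝ) < m := by exact_mod_cast (by omega : 0 < m)
  split_ifs with h
  · exact le_of_eq (by push_cast; ring)
  · have him : (i : ℝ) + 2 = m := by exact_mod_cast (by omega : i + 2 = m)
    field_simp
    push_cast
    linarith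

lemma inv_sqrt_two_pow_add_pow (k : ℕ) :
    (√2)⁻¹ ^ k + (√2)⁻¹ ^ (k + 2) = 3 / √2 * (√2)⁻¹ ^ (k + 1) := by
  have h2 : (√2)⁻¹ ^ 2 = 1 / 2 := by rw [inv_pow, Real.sq_sqrt zero_le_two, one_div]
  rw [div_eq_mul_inv]
  linear_combination (-2 * (√2)⁻¹ ^ k) * h2

section Bounds

variable {p q r : ℕ}

lemma two_smul_treeVec_le_adjT_mulVec (hp : 2 ≤ p) (hq : 2 ≤ q) (hr : 2 ≤ r)
    (h : 1 / (p : ℝ) + 1 / (q : ℝ) + 1 / (r : ℝ) ≤ 1) :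
    (2 : ℝ) • treeVec p q r (fun m k => 1 - (k : ℝ) / m) ≤
      adjT p q r *ᵥ treeVec p q r (fun m k => 1 - (k : ℝ) / m) := by
  rintro (_ | i | i | i)
  · rw [adjT_mulVec_treeVec_none _ hp hq hr]
    simp only [Pi.smul_apply, smul_eq_mul, treeVec, Nat.cast_one]
    linarith
  · rw [adjT_mulVec_treeVec_inl _ (by simp)]
    exact two_mul_one_sub_div_le (by omega)
  · rw [adjT_mulVec_treeVec_inr_inl _ (by simp)]
    exact two_mul_one_sub_div_le (by omega)
  · rw [adjT_mulVec_treeVec_inr_inr _ (by simp)]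
    exact two_mul_one_sub_div_le (by omega)

lemma adjT_mulVec_treeVec_le_smul (hp : 2 ≤ p) (hq : 2 ≤ q) (hr : 2 ≤ r) :
    adjT p q r *ᵥ treeVec p q r (fun _ k => (√2)⁻¹ ^ k) ≤
      (3 / √2) • treeVec p q r (fun _ k => (√2)⁻¹ ^ k) := by
  have harm (m i : ℕ) : (√2)⁻¹ ^ i + (if i + 2 < m then (√2)⁻¹ ^ (i + 2) else 0) ≤
      3 / √2 * (√2)⁻¹ ^ (i + 1) := by
    rw [← inv_sqrt_two_pow_add_pow]
    gcongr
    split_ifs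
    exacts [le_rfl, by positivity]
  rintro (_ | i | i | i)
  · rw [adjT_mulVec_treeVec_none _ hp hq hr]
    simp only [Pi.smul_apply, smul_eq_mul, treeVec, div_eq_mul_inv]
    exact le_of_eq (by ring)
  · rw [adjT_mulVec_treeVec_inl _ (pow_zero _)]
    exact harm p i
  · rw [adjT_mulVec_treeVec_inr_inl _ (pow_zero _)]
    exact harm q i
  · rw [adjT_mulVec_treeVec_inr_inr _ (pow_zero _)]
    exact harm r i

lemma adjT_eigenvalue_le (hp : 2 ≤ p) (hq : 2 ≤ q) (hr : 2 ≤ r) {μ : ℝ} {x : TVertex p q r → ℝ}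
    (hx : x ≠ 0) (hAx : adjT p q r *ᵥ x = μ • x) : μ ≤ 3 / √2 := by
  refine (le_abs_self μ).trans <| abs_le_of_mulVec_eq_smul_of_mulVec_le adjT_nonneg
    (fun v => ?_) (adjT_mulVec_treeVec_le_smul hp hq hr) hx hAx
  rcases v with _ | i | i | i <;> simp only [treeVec] <;> positivity

lemma exists_adjT_eigenvalue_ge_two (hp : 2 ≤ p) (hq : 2 ≤ q) (hr : 2 ≤ r)
    (h : 1 / (p : ℝ) + 1 / (q : ℝ) + 1 / (r : ℝ) ≤ 1) :
    ∃ μ : ℝ, (∃ x, x ≠ 0 ∧ adjT p q r *ᵥ x = μ • x) ∧ 2 ≤ μ := by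
  refine adjT_isHermitian.exists_eigenvalue_ge_of_smul_le_mulVec ?_
    (fun h0 => one_ne_zero (congrFun h0 none : (1 : ℝ) = 0))
    (two_smul_treeVec_le_adjT_mulVec hp hq hr h)
  rintro (_ | i | i | i)
  · exact zero_le_one
  all_goals exact sub_nonneg.2 (div_le_one_of_le₀
    (Nat.cast_le.2 (i.isLt.trans_le (Nat.sub_le _ _))) (Nat.cast_nonneg _))

end Bounds

/-- If `p, q, r ≥ 2` and `1/p + 1/q + 1/r ≤ 1` then `2 ≤ μ(p,q,r) ≤ 3/√2`. -/
theorem muT_between_two_and_three_over_sqrt_two (p q r : ℕ)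
    (hp : 2 ≤ p) (hq : 2 ≤ q) (hr : 2 ≤ r)
    (h : 1 / (p : ℝ) + 1 / (q : ℝ) + 1 / (r : ℝ) ≤ 1) :
    2 ≤ muT p q r ∧ muT p q r ≤ 3 / Real.sqrt 2 := by
  have hupper : ∀ μ ∈ {μ : ℝ | ∃ x, x ≠ 0 ∧ adjT p q r *ᵥ x = μ • x}, μ ≤ 3 / √2 :=
    fun _ ⟨_, hx, hAx⟩ => adjT_eigenvalue_le hp hq hr hx hAx
  obtain ⟨μ, hμ, hμ2⟩ := exists_adjT_eigenvalue_ge_two hp hq hr h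
  exact ⟨hμ2.trans (le_csSup ⟨_, hupper⟩ hμ), csSup_le ⟨μ, hμ⟩ hupper⟩
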